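/- arXiv:1504.03579 — 2 statements merged into one kernel-verified Lean document; each statement's English description precedes it below -/
import Mathlib

section
/- Fix positive integers $a$ and $t$ and let $A$ be the poset of weakly increasing $a$-tuples with entries in $\{1,\dots,t\}$ ordered by $\underline{i} \preccurlyeq \underline{j} \iff \forall s,\, i_s \ge j_s$. For $a = 2$, the maximal size of an antichain in $A$ equals $\lfloor (t+1)/2 \rfloor$. -/
/-!
In an antichain of pairs `x₀ ≤ x₁`, a pair is determined by either of its coordinates, and every
first coordinate is at most every second coordinate: if `y₀ < x₀` then `x₁ < y₁`, so
`x₀ ≤ x₁ < y₁`. Hence the sets `F` of first and `S` of second coordinates have `#B` elements each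
and meet in at most one point, so `2 #B - 1 ≤ #(F ∪ S) ≤ t`. The antidiagonal `(i, t - 1 - i)`,
`i < (t + 1) / 2`, attains the bound.
-/

open Finset

theorem Finset.card_add_card_le_card_union_add_one {α : Type*} [PartialOrder α] [DecidableEq α]
    {s t : Finset α} (h : ∀ a ∈ s, ∀ b ∈ t, a ≤ b) : #s + #t ≤ #(s ∪ t) + 1 := by
  rw [← card_union_add_card_inter]
  gcongr
  refine card_le_one.mpr fun a ha b hb => le_antisymm ?_ ?_
  · exact h a (mem_inter.1 ha).1 b (mem_inter.1 hb).2
  · exact h b (mem_inter.1 hb).1 a (mem_inter.1 ha).2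

namespace MonotonePair

variable {α : Type*} [LinearOrder α]

theorem le_or_le_of_apply_eq {g h : Fin 2 → α} {i : Fin 2} (hi : g i = h i) : g ≤ h ∨ h ≤ g := by
  simp only [Pi.le_def, Fin.forall_fin_two]
  fin_cases i
  · rcases le_total (g 1) (h 1) with h1 | h1
    exacts [.inl ⟨hi.le, h1⟩, .inr ⟨hi.ge, h1⟩]
  · rcases le_total (g 0) (h 0) with h0 | h0
    exacts [.inl ⟨h0, hi.le⟩, .inr ⟨h0, hi.ge⟩]

variable {B : Set {g : Fin 2 → α // Monotone g}}

theorem injOn_apply_of_isAntichain (hB : IsAntichain (· ≤ ·) B) (i : Fin 2) :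
    B.InjOn fun g => g.1 i := by
  intro x hx y hy hxy
  by_contra hne
  rcases le_or_le_of_apply_eq hxy with h | h
  exacts [hB hx hy hne h, hB hy hx (Ne.symm hne) h]

theorem fst_le_snd_of_isAntichain (hB : IsAntichain (· ≤ ·) B) {x y : {g : Fin 2 → α // Monotone g}}
    (hx : x ∈ B) (hy : y ∈ B) : x.1 0 ≤ y.1 1 := by
  have hy01 : y.1 0 ≤ y.1 1 := y.2 zero_le_one
  rcases le_or_gt (x.1 0) (y.1 0) with h0 | h0
  · exact h0.trans hy01
  rcases le_or_gt (x.1 1) (y.1 1) with h1 | h1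
  · exact (x.2 zero_le_one).trans h1
  have hne : y ≠ x := fun h => h0.ne (by rw [h])
  exact absurd (show y.1 ≤ x.1 from Pi.le_def.2 (Fin.forall_fin_two.2 ⟨h0.le, h1.le⟩))
    (hB hy hx hne)

theorem two_mul_card_le_of_isAntichain [Fintype α] {B : Finset {g : Fin 2 → α // Monotone g}}
    (hB : IsAntichain (· ≤ ·) (B : Set {g : Fin 2 → α // Monotone g})) :
    2 * #B ≤ Fintype.card α + 1 := by
  have hcard (i : Fin 2) : #(B.image fun g => g.1 i) = #B :=
    card_image_of_injOn (injOn_apply_of_isAntichain hB i)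
  have hsplit := card_add_card_le_card_union_add_one (s := B.image fun g => g.1 0)
    (t := B.image fun g => g.1 1) (by
      simp only [mem_image]
      rintro _ ⟨x, hx, rfl⟩ _ ⟨y, hy, rfl⟩
      exact fst_le_snd_of_isAntichain hB hx hy)
  rw [hcard, hcard] at hsplit
  have := card_le_univ ((B.image fun g => g.1 0) ∪ B.image fun g => g.1 1)
  omega

end MonotonePair

def antidiagonalPair {t : ℕ} (i : Fin ((t + 1) / 2)) : {g : Fin 2 → Fin t // Monotone g} :=
  ⟨![Fin.castLE (by omega) i, (Fin.castLE (by omega) i).rev],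
    monotone_vecEmpty.vecCons (by
      simp only [Matrix.cons_val_zero, Fin.le_def, Fin.val_rev, Fin.val_castLE]; omega)⟩

theorem isAntichain_range_antidiagonalPair (t : ℕ) :
    IsAntichain (· ≤ ·) (Set.range (antidiagonalPair (t := t))) := by
  rintro _ ⟨i, rfl⟩ _ ⟨j, rfl⟩ hne hle
  have h := Pi.le_def.1 hle
  simp only [antidiagonalPair, Fin.forall_fin_two, Matrix.cons_val_zero, Matrix.cons_val_one,
    Fin.rev_le_rev] at h
  exact hne (congrArg _ (Fin.castLE_injective _ (le_antisymm h.1 h.2)))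

theorem antidiagonalPair_injective (t : ℕ) : Function.Injective (antidiagonalPair (t := t)) :=
  fun i j h => Fin.ext (by simpa [antidiagonalPair] using congrArg (fun g => (g.1 0 : ℕ)) h)

theorem stmt_12_general (t : ℕ) :
    IsGreatest {n : ℕ | ∃ B : Finset {g : Fin 2 → Fin t // Monotone g},
        IsAntichain (fun i j => ∀ s, j.1 s ≤ i.1 s)
          (B : Set {g : Fin 2 → Fin t // Monotone g}) ∧ B.card = n}
      ((t + 1) / 2) := by
  constructor
  · refine ⟨univ.map ⟨_, antidiagonalPair_injective t⟩, ?_, by simp⟩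
    rw [coe_map, coe_univ, Set.image_univ]
    exact (isAntichain_range_antidiagonalPair t).swap
  · rintro n ⟨B, hB, rfl⟩
    have := MonotonePair.two_mul_card_le_of_isAntichain (B := B) hB.swap
    rw [Fintype.card_fin] at this
    omega

/-- for `a = 2`, the maximal size of an antichain in the poset of weakly
increasing pairs with entries in `{1,…,t}`, ordered by `i ≼ j ↔ ∀ s, i s ≥ j s`,
is `⌊(t+1)/2⌋`. -/
theorem stmt_12 (t : ℕ) (ht : 0 < t) :
    IsGreatest {n : ℕ | ∃ B : Finset {g : Fin 2 → Fin t // Monotone g},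
        IsAntichain (fun i j => ∀ s, j.1 s ≤ i.1 s)
          (B : Set {g : Fin 2 → Fin t // Monotone g}) ∧ B.card = n}
      ((t + 1) / 2) :=
  stmt_12_general t
end

section
/- Let $s \ge 2$ and let $f : \mathbb{R}^s \to \mathbb{R}$ be given by $f(\beta) = \langle c, \beta \rangle + \max_{k=1,\dots,p} \langle v_k, \beta \rangle$ where $c \in \mathbb{R}^s$ and $v_1,\dots,v_p \in \mathbb{R}^s$ with $p \le s - 1$. If there exists $\alpha \in \mathbb{R}^s$ with $\alpha_i > 0$ for all $i$ and $f(\alpha) \le 0$, then there exists $\beta \in \mathbb{R}^s$ with $\beta_i \ge 0$ for all $i$, $\beta_j = 0$ for some $j$, $\beta \ne 0$, and $f(\beta) \le 0$. -/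
open Finset Matrix

/-!
Writing `f β = max_k (c + v k) ⬝ᵥ β`, the set `{f ≤ 0}` is the cone cut out by the `p`
inequalities `(c + v k) ⬝ᵥ β ≤ 0`. Since `p < s`, some `d ≠ 0` with `d₀ = 0` has all the
values `(c + v k) ⬝ᵥ d` equal to one number `a`, and after a change of sign `a ≤ 0`. On the
ray `d + t α`, `t ≥ 0`, every piece stays `≤ 0`. Its first point in the closed orthant,
at `t = max_i (-dᵢ / αᵢ) ≥ 0` (nonnegative as `d₀ = 0`), has a zero coordinate, and it is not
`0` because `d ∉ ℝ α`.
-/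

lemma Matrix.exists_ne_zero_mulVec_eq_zero_of_card_lt {K m n : Type*} [Field K] [Fintype m]
    [Fintype n] (M : Matrix m n K) (h : Fintype.card m < Fintype.card n) :
    ∃ d ≠ 0, M *ᵥ d = 0 := by
  obtain ⟨d, hd, hd0⟩ := Submodule.exists_mem_ne_zero_of_ne_bot
    (LinearMap.ker_ne_bot_of_finrank_lt (f := M.mulVecLin) (by simpa using h))
  exact ⟨d, hd0, hd⟩

/-- The rows `W k - W k₀ + eᵢ₀` give `card κ` homogeneous equations in `card ι` unknowns. -/
lemma exists_ne_zero_apply_eq_zero_dotProduct_eq {K ι κ : Type*} [Field K] [Fintype ι]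
    [Fintype κ] [DecidableEq ι] (W : κ → ι → K) (h : Fintype.card κ < Fintype.card ι)
    (i₀ : ι) (k₀ : κ) :
    ∃ d ≠ 0, d i₀ = 0 ∧ ∀ k, W k ⬝ᵥ d = W k₀ ⬝ᵥ d := by
  obtain ⟨d, hd, hMd⟩ :=
    (of fun k => W k - W k₀ + Pi.single i₀ 1).exists_ne_zero_mulVec_eq_zero_of_card_lt h
  have hrow (k : κ) : W k ⬝ᵥ d - W k₀ ⬝ᵥ d + d i₀ = 0 := by
    have : (W k - W k₀ + Pi.single i₀ 1) ⬝ᵥ d = 0 := congrFun hMd k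
    rwa [add_dotProduct, sub_dotProduct, single_dotProduct, one_mul] at this
  have hi₀ : d i₀ = 0 := by simpa using hrow k₀
  exact ⟨d, hd, hi₀, fun k => by linear_combination hrow k - hi₀⟩

lemma exists_ne_zero_apply_eq_zero_dotProduct_eq_nonpos {K ι κ : Type*} [Field K]
    [LinearOrder K] [IsStrictOrderedRing K] [Fintype ι] [Fintype κ] [DecidableEq ι]
    (W : κ → ι → K) (h : Fintype.card κ < Fintype.card ι) (i₀ : ι) (k₀ : κ) :
    ∃ d ≠ 0, d i₀ = 0 ∧ ∃ a ≤ 0, ∀ k, W k ⬝ᵥ d = a := by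
  obtain ⟨d, hd, hi₀, hW⟩ := exists_ne_zero_apply_eq_zero_dotProduct_eq W h i₀ k₀
  rcases le_total (W k₀ ⬝ᵥ d) 0 with hneg | hpos
  · exact ⟨d, hd, hi₀, _, hneg, hW⟩
  · refine ⟨-d, neg_ne_zero.mpr hd, by simp [hi₀], _, neg_nonpos.mpr hpos, fun k => ?_⟩
    rw [dotProduct_neg, hW k]

lemma exists_nonneg_add_smul_mem_orthant_boundary {K ι : Type*} [Field K] [LinearOrder K]
    [IsStrictOrderedRing K] [Fintype ι] {α d : ι → K} (hα : ∀ i, 0 < α i) (hd : d ≠ 0)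
    {j₀ : ι} (hj₀ : d j₀ = 0) :
    ∃ t : K, 0 ≤ t ∧ (∀ i, 0 ≤ (d + t • α) i) ∧ (∃ j, (d + t • α) j = 0) ∧ d + t • α ≠ 0 := by
  obtain ⟨j, -, hj⟩ := exists_max_image univ (fun i => -d i / α i) ⟨j₀, mem_univ _⟩
  refine ⟨-d j / α j, ?_, fun i => ?_, ⟨j, ?_⟩, fun h => hd ?_⟩
  · simpa [hj₀] using hj j₀ (mem_univ _)
  · have := (div_le_iff₀ (hα i)).mp (hj i (mem_univ _))
    simp only [Pi.add_apply, Pi.smul_apply, smul_eq_mul]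
    linarith
  · simp [div_mul_cancel₀ _ (hα j).ne']
  · have ht : -d j / α j = 0 := by
      simpa [hj₀, (hα j₀).ne'] using congrFun h j₀
    simpa [ht] using h

lemma add_sup'_nonpos_iff {G ι : Type*} [AddCommGroup G] [LinearOrder G]
    [IsOrderedAddMonoid G] {s : Finset ι} (H : s.Nonempty) (a : G) (g : ι → G) :
    a + s.sup' H g ≤ 0 ↔ ∀ k ∈ s, a + g k ≤ 0 := by
  simp only [← le_neg_iff_add_nonpos_left, sup'_le_iff]

theorem stmt_17_general (s p : ℕ) (hp : 1 ≤ p) (hps : p ≤ s - 1)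
    (c : Fin s → ℝ) (v : Fin p → Fin s → ℝ)
    (f : (Fin s → ℝ) → ℝ)
    (hf : ∀ β, f β = (∑ i, c i * β i) +
      (Finset.univ.sup' (univ_nonempty_iff.mpr (Fin.pos_iff_nonempty.mp hp))
        fun k => ∑ i, v k i * β i))
    (α : Fin s → ℝ) (hαpos : ∀ i, 0 < α i) (hfα : f α ≤ 0) :
    ∃ β : Fin s → ℝ, (∀ i, 0 ≤ β i) ∧ (∃ j, β j = 0) ∧ β ≠ 0 ∧ f β ≤ 0 := by
  have hf_nonpos (β : Fin s → ℝ) : f β ≤ 0 ↔ ∀ k, (c + v k) ⬝ᵥ β ≤ 0 := by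
    rw [hf, add_sup'_nonpos_iff]
    simp only [mem_univ, true_imp_iff, add_dotProduct]
    rfl
  obtain ⟨d, hd, hd₀, a, ha, hWd⟩ := exists_ne_zero_apply_eq_zero_dotProduct_eq_nonpos
    (fun k => c + v k) (by simp only [Fintype.card_fin]; omega) ⟨0, by omega⟩ ⟨0, hp⟩
  obtain ⟨t, ht, hβ, hβj, hβne⟩ := exists_nonneg_add_smul_mem_orthant_boundary hαpos hd hd₀
  refine ⟨d + t • α, hβ, hβj, hβne, (hf_nonpos _).2 fun k => ?_⟩
  have hαk := (hf_nonpos α).1 hfα k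
  rw [dotProduct_add, dotProduct_smul, hWd k, smul_eq_mul]
  nlinarith

/-- let `f(β) = ⟨c,β⟩ + max_k ⟨v k, β⟩` on `ℝ^s`, with `1 ≤ p ≤ s - 1`
linear pieces.  If `f(α) ≤ 0` at some strictly positive `α`, then `f ≤ 0` at some
nonzero point of the boundary of the positive orthant. -/
theorem stmt_17 (s p : ℕ) (hs : 2 ≤ s) (hp : 1 ≤ p) (hps : p ≤ s - 1)
    (c : Fin s → ℝ) (v : Fin p → Fin s → ℝ)
    (f : (Fin s → ℝ) → ℝ)
    (hf : ∀ β, f β = (∑ i, c i * β i) +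
      (Finset.univ.sup' (univ_nonempty_iff.mpr (Fin.pos_iff_nonempty.mp hp))
        fun k => ∑ i, v k i * β i))
    (α : Fin s → ℝ) (hαpos : ∀ i, 0 < α i) (hfα : f α ≤ 0) :
    ∃ β : Fin s → ℝ, (∀ i, 0 ≤ β i) ∧ (∃ j, β j = 0) ∧ β ≠ 0 ∧ f β ≤ 0 :=
  stmt_17_general s p hp hps c v f hf α hαpos hfα
end
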